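/- Adjoint-based gradient formula for the reduced inverse objective: fix θ ∈ ℝᵖ and suppose (ψ, η) ∈ ℝⁿ × ℝ^q satisfies (∂F/∂z)(z*(θ),θ)ᵀ ψ + Aᵀ η = −β Wᵀ (W z*(θ) − zᵒ) and A ψ = 0. Then the reduced objective 𝒥 is differentiable at θ and ∇𝒥(θ) = (∂F/∂θ)(z*(θ),θ)ᵀ ψ + γ Gᵀ (G θ − θᵒ) + α RᵀR θ. -/

import Mathlib

/-!
Differentiating the constraints `F (z* ϑ) ϑ = 0` and `A z* ϑ = b` in the direction `v` shows that
the state sensitivity `u = z*'(θ) v` satisfies `∂_z F u = -∂_θ F v` and `A u = 0`. The derivative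
of `𝒥` at `θ` in direction `v` is `α ⟪Rθ, Rv⟫ + β ⟪W z* θ - zᵒ, W u⟫ + γ ⟪Gθ - θᵒ, Gv⟫`, and
pairing the adjoint equation with `u` turns the only term involving `u` into `⟪ψ, ∂_θ F v⟫`.
-/

/-- The reduced inverse objective
`𝒥(ϑ) = (α/2)‖R ϑ‖² + (β/2)‖W z*(ϑ) − zᵒ‖² + (γ/2)‖G ϑ − θᵒ‖²`. -/
noncomputable def redObj (n pdim m r : ℕ)
    (W : Matrix (Fin m) (Fin n) ℝ) (G : Matrix (Fin r) (Fin pdim) ℝ)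
    (R : Matrix (Fin pdim) (Fin pdim) ℝ)
    (zobs : Fin m → ℝ) (tobs : Fin r → ℝ)
    (α β γ : ℝ) (zstar : (Fin pdim → ℝ) → (Fin n → ℝ))
    (ϑ : Fin pdim → ℝ) : ℝ :=
  α / 2 * ∑ i : Fin pdim, (R.mulVec ϑ i) ^ 2
    + β / 2 * ∑ i : Fin m, ((W.mulVec (zstar ϑ) - zobs) i) ^ 2
    + γ / 2 * ∑ i : Fin r, ((G.mulVec ϑ - tobs) i) ^ 2

open Matrix

section Calculus

variable {𝕜 E F G : Type*} [NontriviallyNormedField 𝕜]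
  [NormedAddCommGroup E] [NormedSpace 𝕜 E] [NormedAddCommGroup F] [NormedSpace 𝕜 F]
  [NormedAddCommGroup G] [NormedSpace 𝕜 G]

theorem map_fderiv_eq_zero_of_map_eq_const {L : E →L[𝕜] G} {g : F → E} {x : F} {c : G}
    (hg : DifferentiableAt 𝕜 g x) (h : ∀ y, L (g y) = c) (v : F) :
    L (fderiv 𝕜 g x v) = 0 := by
  have hconst : HasFDerivAt (fun y => L (g y)) (0 : F →L[𝕜] G) x := by
    simpa only [h] using hasFDerivAt_const c x
  simpa using congrArg (· v) ((L.hasFDerivAt.comp x hg.hasFDerivAt).unique hconst)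

theorem fderiv_partial_fst_add_fderiv_partial_snd_eq_zero {f : E → F → G} {g : F → E} {x : F}
    {c : G} (hf : DifferentiableAt 𝕜 (fun p : E × F => f p.1 p.2) (g x, x))
    (hg : DifferentiableAt 𝕜 g x) (h : ∀ y, f (g y) y = c) (v : F) :
    fderiv 𝕜 (fun z => f z x) (g x) (fderiv 𝕜 g x v) + fderiv 𝕜 (fun t => f (g x) t) x v = 0 := by
  set f' := fderiv 𝕜 (fun p : E × F => f p.1 p.2) (g x, x)
  have hf' : HasFDerivAt (fun p : E × F => f p.1 p.2) f' (g x, x) := hf.hasFDerivAt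
  have hfst : fderiv 𝕜 (fun z => f z x) (g x) = f'.comp (.inl 𝕜 E F) :=
    (hf'.comp (f := fun z => (z, x)) (g x) (hasFDerivAt_prodMk_left (g x) x)).fderiv
  have hsnd : fderiv 𝕜 (fun t => f (g x) t) x = f'.comp (.inr 𝕜 E F) :=
    (hf'.comp (f := fun t => (g x, t)) x (hasFDerivAt_prodMk_right (g x) x)).fderiv
  have hconst : HasFDerivAt (fun y => f (g y) y) (0 : F →L[𝕜] G) x := by
    simpa only [h] using hasFDerivAt_const c x
  have hchain :=
    (hf'.comp (f := fun y => (g y, y)) x (hg.hasFDerivAt.prodMk (hasFDerivAt_id x))).unique hconst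
  rw [hfst, hsnd, ContinuousLinearMap.comp_apply, ContinuousLinearMap.comp_apply, ← map_add]
  simpa using congrArg (· v) hchain

end Calculus

section Quadratic

variable {𝕜 E ι : Type*} [NontriviallyNormedField 𝕜] [NormedAddCommGroup E] [NormedSpace 𝕜 E]
  [Fintype ι]

theorem ContinuousLinearMap.sum_smul_proj_comp_apply (a : ι → 𝕜) (L : E →L[𝕜] ι → 𝕜) (v : E) :
    (∑ i, a i • (ContinuousLinearMap.proj i).comp L) v = a ⬝ᵥ L v := by
  simp [dotProduct]

theorem HasFDerivAt.sum_sq {f : E → ι → 𝕜} {f' : E →L[𝕜] ι → 𝕜} {x : E}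
    (hf : HasFDerivAt f f' x) :
    HasFDerivAt (fun y => ∑ i, f y i ^ 2)
      ((2 : 𝕜) • ∑ i, f x i • (ContinuousLinearMap.proj i).comp f') x := by
  rw [Finset.smul_sum]
  refine HasFDerivAt.fun_sum fun i _ => ?_
  simpa [smul_smul] using ((hasFDerivAt_apply i (f x)).comp x hf).pow 2

theorem Matrix.hasFDerivAt_mulVec [CompleteSpace 𝕜] {m n : Type*} [Fintype m] [Fintype n]
    (M : Matrix m n 𝕜) (x : n → 𝕜) :
    HasFDerivAt (fun y => M *ᵥ y) (LinearMap.toContinuousLinearMap M.mulVecLin) x :=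
  (LinearMap.toContinuousLinearMap M.mulVecLin).hasFDerivAt

end Quadratic

section Jacobian

variable {𝕜 ι κ : Type*} [NontriviallyNormedField 𝕜] [Fintype κ] [DecidableEq κ]

/-- Entry `(i, k)` is `T i (Pi.single k 1)` by `rfl`, the form in which the partial derivatives
appear in the adjoint equation. -/
noncomputable def jacobianMatrix (T : ι → (κ → 𝕜) →L[𝕜] 𝕜) : Matrix ι κ 𝕜 :=
  LinearMap.toMatrix' (ContinuousLinearMap.pi T : (κ → 𝕜) →ₗ[𝕜] ι → 𝕜)

theorem jacobianMatrix_mulVec (T : ι → (κ → 𝕜) →L[𝕜] 𝕜) (v : κ → 𝕜) :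
    jacobianMatrix T *ᵥ v = fun i => T i v :=
  LinearMap.toMatrix'_mulVec _ v

end Jacobian

theorem Matrix.mul_dotProduct_mulVec_eq_of_adjoint {R ι κ μ ν : Type*} [CommRing R]
    [Fintype ι] [Fintype κ] [Fintype μ] [Fintype ν]
    {J : Matrix ι κ R} {A : Matrix μ κ R} {W : Matrix ν κ R} {ψ : ι → R} {η : μ → R}
    {r : ν → R} {u : κ → R} {β : R}
    (hadj : Jᵀ *ᵥ ψ + Aᵀ *ᵥ η = -(β • (Wᵀ *ᵥ r))) (hu : A *ᵥ u = 0) :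
    β * (r ⬝ᵥ W *ᵥ u) = -(ψ ⬝ᵥ J *ᵥ u) := by
  calc β * (r ⬝ᵥ W *ᵥ u) = -(-(β • (Wᵀ *ᵥ r)) ⬝ᵥ u) := by
        rw [neg_dotProduct, neg_neg, smul_dotProduct, mulVec_transpose, dotProduct_mulVec,
          smul_eq_mul]
    _ = -(ψ ⬝ᵥ J *ᵥ u) := by
        rw [← hadj, add_dotProduct, mulVec_transpose, mulVec_transpose, ← dotProduct_mulVec,
          ← dotProduct_mulVec, hu, dotProduct_zero, add_zero]

theorem adjoint_gradient_formula_general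
    (n pdim q m r : ℕ)
    (F : (Fin n → ℝ) → (Fin pdim → ℝ) → (Fin n → ℝ))
    (hF : Differentiable ℝ (fun zt : (Fin n → ℝ) × (Fin pdim → ℝ) => F zt.1 zt.2))
    (A : Matrix (Fin q) (Fin n) ℝ) (b : Fin q → ℝ)
    (W : Matrix (Fin m) (Fin n) ℝ) (G : Matrix (Fin r) (Fin pdim) ℝ)
    (R : Matrix (Fin pdim) (Fin pdim) ℝ)
    (zobs : Fin m → ℝ) (tobs : Fin r → ℝ)
    (α β γ : ℝ)
    (zstar : (Fin pdim → ℝ) → (Fin n → ℝ)) (hzstar : Differentiable ℝ zstar)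
    (heq : ∀ ϑ, F (zstar ϑ) ϑ = 0)
    (hlin : ∀ ϑ, A.mulVec (zstar ϑ) = b)
    (θ : Fin pdim → ℝ) (ψ : Fin n → ℝ) (η : Fin q → ℝ)
    (hadj1 : ∀ k : Fin n,
      (∑ i : Fin n, fderiv ℝ (fun z => F z θ i) (zstar θ) (Pi.single k 1) * ψ i)
        + (∑ i : Fin q, A i k * η i)
        = -(β * ∑ i : Fin m, W i k * ((W.mulVec (zstar θ) - zobs) i))) :
    DifferentiableAt ℝ (redObj n pdim m r W G R zobs tobs α β γ zstar) θ ∧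
    ∀ v : Fin pdim → ℝ,
      fderiv ℝ (redObj n pdim m r W G R zobs tobs α β γ zstar) θ v
        = ∑ k : Fin pdim,
            ((∑ i : Fin n, fderiv ℝ (fun t => F (zstar θ) t i) θ (Pi.single k 1) * ψ i)
              + γ * ∑ i : Fin r, G i k * ((G.mulVec θ - tobs) i)
              + α * ((R.transpose * R).mulVec θ) k) * v k := by
  set Jz := jacobianMatrix fun i => fderiv ℝ (fun z => F z θ i) (zstar θ)
  set Jθ := jacobianMatrix fun i => fderiv ℝ (fun t => F (zstar θ) t i) θ
  have hJ : HasFDerivAt (redObj n pdim m r W G R zobs tobs α β γ zstar) _ θ :=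
    (((hasFDerivAt_mulVec R θ).sum_sq.const_mul (α / 2)).add
      ((((hasFDerivAt_mulVec W (zstar θ)).comp θ (hzstar θ).hasFDerivAt).sub_const
        zobs).sum_sq.const_mul (β / 2))).add
      (((hasFDerivAt_mulVec G θ).sub_const tobs).sum_sq.const_mul (γ / 2))
  refine ⟨hJ.differentiableAt, fun v => ?_⟩
  have hsens : Jz *ᵥ fderiv ℝ zstar θ v = -(Jθ *ᵥ v) := by
    simp only [Jz, Jθ, jacobianMatrix_mulVec]
    funext i
    exact eq_neg_of_add_eq_zero_left <| fderiv_partial_fst_add_fderiv_partial_snd_eq_zero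
      (f := fun z t => F z t i) (differentiable_pi.mp hF i _) (hzstar θ)
      (fun ϑ => congrFun (heq ϑ) i) v
  have hconstraint : A *ᵥ fderiv ℝ zstar θ v = 0 :=
    map_fderiv_eq_zero_of_map_eq_const (L := LinearMap.toContinuousLinearMap A.mulVecLin)
      (hzstar θ) hlin v
  have hadj : Jzᵀ *ᵥ ψ + Aᵀ *ᵥ η = -(β • (Wᵀ *ᵥ (W *ᵥ zstar θ - zobs))) := funext hadj1
  have hadjoint := mul_dotProduct_mulVec_eq_of_adjoint hadj hconstraint
  rw [hsens, dotProduct_neg, neg_neg] at hadjoint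
  change _ = (Jθᵀ *ᵥ ψ + γ • (Gᵀ *ᵥ (G *ᵥ θ - tobs)) + α • ((Rᵀ * R) *ᵥ θ)) ⬝ᵥ v
  rw [hJ.fderiv]
  simp only [_root_.add_apply, _root_.smul_apply, smul_eq_mul, Function.comp_apply,
    ContinuousLinearMap.sum_smul_proj_comp_apply, ContinuousLinearMap.comp_apply,
    LinearMap.coe_toContinuousLinearMap', mulVecLin_apply, add_dotProduct, smul_dotProduct,
    mulVec_transpose, ← dotProduct_mulVec, ← mulVec_mulVec]
  linear_combination hadjoint

/-- adjoint-based gradient formula for the reduced inverse objective. -/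
theorem adjoint_gradient_formula
    (n pdim q m r : ℕ) (hn : 1 ≤ n) (hp : 1 ≤ pdim)
    (F : (Fin n → ℝ) → (Fin pdim → ℝ) → (Fin n → ℝ))
    (hF : Differentiable ℝ (fun zt : (Fin n → ℝ) × (Fin pdim → ℝ) => F zt.1 zt.2))
    (A : Matrix (Fin q) (Fin n) ℝ) (b : Fin q → ℝ)
    (W : Matrix (Fin m) (Fin n) ℝ) (G : Matrix (Fin r) (Fin pdim) ℝ)
    (R : Matrix (Fin pdim) (Fin pdim) ℝ)
    (zobs : Fin m → ℝ) (tobs : Fin r → ℝ)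
    (α β γ : ℝ) (hα : 0 ≤ α) (hβ : 0 < β) (hγ : 0 < γ)
    (zstar : (Fin pdim → ℝ) → (Fin n → ℝ)) (hzstar : Differentiable ℝ zstar)
    (heq : ∀ ϑ, F (zstar ϑ) ϑ = 0)
    (hlin : ∀ ϑ, A.mulVec (zstar ϑ) = b)
    (θ : Fin pdim → ℝ) (ψ : Fin n → ℝ) (η : Fin q → ℝ)
    (hadj1 : ∀ k : Fin n,
      (∑ i : Fin n, fderiv ℝ (fun z => F z θ i) (zstar θ) (Pi.single k 1) * ψ i)
        + (∑ i : Fin q, A i k * η i)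
        = -(β * ∑ i : Fin m, W i k * ((W.mulVec (zstar θ) - zobs) i)))
    (hadj2 : A.mulVec ψ = 0) :
    DifferentiableAt ℝ (redObj n pdim m r W G R zobs tobs α β γ zstar) θ ∧
    ∀ v : Fin pdim → ℝ,
      fderiv ℝ (redObj n pdim m r W G R zobs tobs α β γ zstar) θ v
        = ∑ k : Fin pdim,
            ((∑ i : Fin n, fderiv ℝ (fun t => F (zstar θ) t i) θ (Pi.single k 1) * ψ i)
              + γ * ∑ i : Fin r, G i k * ((G.mulVec θ - tobs) i)
              + α * ((R.transpose * R).mulVec θ) k) * v k :=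
  adjoint_gradient_formula_general n pdim q m r F hF A b W G R zobs tobs α β γ zstar hzstar heq hlin
    θ ψ η hadj1
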